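/- arXiv:1209.2064 — 9 statements merged into one kernel-verified Lean document; each statement's English description precedes it below -/
import Mathlib

section
/- Let R be a commutative ℚ-algebra with a pre-λ-structure λ_t and a ring endomorphism aug : R → R such that aug ∘ aug = aug and, for all x ∈ R and i ≥ 0, aug(λ^i(x)) = C(aug(x), i), where C(z,i) := z(z−1)···(z−i+1)/i! for z ∈ R. Suppose V ∈ R is such that λ_t(V) is a polynomial in t of degree at most d ≥ 1 and aug(λ^d(V)) is a unit of R. Then aug(V) = d·1, and consequently aug(λ^i(V)) = C(d,i)·1 for all i ≥ 0; in particular aug(λ^i(V)) = 0 for i > d. -/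
/-!
Since `C(z, d + 1) = C(z, d) · (z - d) / (d + 1)`, the vanishing of `aug (λ^(d+1) V) = C(aug V, d + 1)`
together with the invertibility of `aug (λ^d V) = C(aug V, d)` forces `aug V = d`.
-/

/-- The generalized binomial coefficient `C(z, i) = z(z-1)⋯(z-i+1)/i!` for an
element `z` of a `ℚ`-algebra. -/
noncomputable def qBinom {R : Type*} [CommRing R] [Algebra ℚ R] (z : R) (i : ℕ) : R :=
  ((i.factorial : ℚ)⁻¹) • ∏ k ∈ Finset.range i, (z - (k : R))

section qBinom

variable {R : Type*} [CommRing R] [Algebra ℚ R]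

theorem qBinom_succ (z : R) (i : ℕ) :
    qBinom z (i + 1) = ((i + 1 : ℕ) : ℚ)⁻¹ • (qBinom z i * (z - i)) := by
  rw [qBinom, qBinom, Finset.prod_range_succ, Nat.factorial_succ, Nat.cast_mul, mul_inv,
    smul_mul_assoc, smul_smul, mul_comm]

theorem qBinom_succ_eq_zero_iff (z : R) (i : ℕ) :
    qBinom z (i + 1) = 0 ↔ qBinom z i * (z - i) = 0 := by
  rw [qBinom_succ, smul_eq_zero_iff_right (inv_ne_zero (Nat.cast_ne_zero.mpr i.succ_ne_zero))]

theorem eq_natCast_of_isUnit_qBinom_of_qBinom_succ_eq_zero {z : R} {d : ℕ}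
    (hunit : IsUnit (qBinom z d)) (hzero : qBinom z (d + 1) = 0) : z = d := by
  rwa [qBinom_succ_eq_zero_iff, hunit.mul_right_eq_zero, sub_eq_zero] at hzero

end qBinom

theorem aug_of_lambda_positive_eq_degree_general
    {R : Type*} [CommRing R] [Algebra ℚ R]
    (l : R → PowerSeries R) (aug : R →+* R)
    -- augmentation axioms
    (haugl : ∀ (x : R) (i : ℕ), aug (PowerSeries.coeff i (l x)) = qBinom (aug x) i)
    -- V has λ-degree at most d and invertible augmented top λ-coefficient
    (V : R) (d : ℕ)
    (hdeg : ∀ i, d < i → PowerSeries.coeff i (l V) = 0)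
    (hunit : IsUnit (aug (PowerSeries.coeff d (l V)))) :
    aug V = (d : R) ∧
    (∀ i : ℕ, aug (PowerSeries.coeff i (l V)) = qBinom ((d : R)) i) ∧
    (∀ i : ℕ, d < i → aug (PowerSeries.coeff i (l V)) = 0) := by
  have hV : aug V = d := by
    refine eq_natCast_of_isUnit_qBinom_of_qBinom_succ_eq_zero ?_ ?_
    · rwa [← haugl]
    · rw [← haugl, hdeg (d + 1) d.lt_succ_self, map_zero]
  exact ⟨hV, fun i => by rw [haugl, hV], fun i hi => by rw [hdeg i hi, map_zero]⟩

theorem aug_of_lambda_positive_eq_degree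
    {R : Type*} [CommRing R] [Algebra ℚ R]
    (l : R → PowerSeries R) (aug : R →+* R)
    -- pre-λ-structure axioms
    (hl0 : ∀ x : R, PowerSeries.coeff 0 (l x) = 1)
    (hl1 : ∀ x : R, PowerSeries.coeff 1 (l x) = x)
    (hladd : ∀ x y : R, l (x + y) = l x * l y)
    (hlone : l 1 = 1 + PowerSeries.X)
    -- augmentation axioms
    (haug : aug.comp aug = aug)
    (haugl : ∀ (x : R) (i : ℕ), aug (PowerSeries.coeff i (l x)) = qBinom (aug x) i)
    -- V has λ-degree at most d and invertible augmented top λ-coefficient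
    (V : R) (d : ℕ) (hd : 1 ≤ d)
    (hdeg : ∀ i, d < i → PowerSeries.coeff i (l V) = 0)
    (hunit : IsUnit (aug (PowerSeries.coeff d (l V)))) :
    aug V = (d : R) ∧
    (∀ i : ℕ, aug (PowerSeries.coeff i (l V)) = qBinom ((d : R)) i) ∧
    (∀ i : ℕ, d < i → aug (PowerSeries.coeff i (l V)) = 0) :=
  aug_of_lambda_positive_eq_degree_general l aug haugl V d hdeg hunit
end

section
/- Let R be an augmented ψ-ring and J a translation group of R. Then: (1) aug(j) = 0 for all j ∈ J; (2) j·j' = 0 for all j, j' ∈ J; (3) J is an ideal of R; (4) for every λ-line element L of R (a unit with ψ^n(L) = L^n for all n ≥ 1) and every j ∈ J, the element L + j is again a λ-line element, i.e. L + j is a unit of R and ψ^n(L+j) = (L+j)^n for all n ≥ 1; and (5) this translation action of J on the set of λ-line elements is free, i.e. L + j = L implies j = 0. -/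
/-!
Since `ψ²` doubles every `j ∈ J` while `aug ∘ ψ² = aug`, we get `2 • aug j = aug j`, so `aug`
kills `J`; the rule `x * j = aug x * j` then makes `J` an ideal of square zero. For a λ-line
element `L`, `aug L` is a unit with `aug L ^ 2 = aug L`, hence `aug L = 1` and `L` acts trivially
on `J`. Therefore `(L + j) ^ n = L ^ n + n • j = ψⁿ (L + j)`, and `L + j` is a unit as a
nilpotent perturbation of one.
-/

section AugmentedPsiRing

variable {R S : Type*} [CommRing R] [CommRing S] {aug : R →+* S} {ψ : R →+* R}

theorem aug_eq_zero_of_psi_eq_two_nsmul (haug : aug.comp ψ = aug) {j : R} (hj : ψ j = 2 • j) :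
    aug j = 0 := by
  have h : aug (ψ j) = aug j := RingHom.congr_fun haug j
  rwa [hj, map_nsmul, two_nsmul, add_eq_right] at h

theorem aug_eq_one_of_psi_eq_sq (haug : aug.comp ψ = aug) {L : R} (hL : IsUnit L)
    (hψL : ψ L = L ^ 2) : aug L = 1 := by
  have h : aug (ψ L) = aug L := RingHom.congr_fun haug L
  rw [hψL, map_pow, sq] at h
  exact (hL.map aug).mul_eq_right.mp h

end AugmentedPsiRing

theorem pow_mul_eq_self_of_mul_eq_self {M : Type*} [Monoid M] {x j : M} (hxj : x * j = j)
    (n : ℕ) : x ^ n * j = j := by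
  induction n with
  | zero => rw [pow_zero, one_mul]
  | succ n ih => rw [pow_succ', mul_assoc, ih, hxj]

theorem add_pow_eq_of_mul_eq_self {R : Type*} [CommSemiring R] {x j : R} (hxj : x * j = j)
    (hjj : j * j = 0) (n : ℕ) : (x + j) ^ n = x ^ n + n * j := by
  induction n with
  | zero => simp
  | succ n ih =>
    calc (x + j) ^ (n + 1) = (x ^ n + n * j) * (x + j) := by rw [pow_succ, ih]
      _ = x ^ (n + 1) + x ^ n * j + n * (x * j) + n * (j * j) := by ring
      _ = x ^ (n + 1) + (n + 1 : ℕ) * j := by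
        rw [pow_mul_eq_self_of_mul_eq_self hxj, hxj, hjj]; push_cast; ring

theorem IsUnit.add_of_mul_self_eq_zero {R : Type*} [CommRing R] {u j : R} (hu : IsUnit u)
    (hjj : j * j = 0) : IsUnit (u + j) :=
  IsNilpotent.isUnit_add_left_of_commute ⟨2, by rw [sq, hjj]⟩ hu (Commute.all j u)

theorem translation_group_properties_general
    {R : Type*} [CommRing R]
    -- augmented ψ-ring structure
    (psi : ℕ → R →+* R) (aug : R →+* R)
    (haugpsi : ∀ n : ℕ, 1 ≤ n → aug.comp (psi n) = aug)
    -- translation group axioms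
    (J : AddSubgroup R)
    (hJ1 : ∀ n : ℕ, 1 ≤ n → ∀ j ∈ J, psi n j = n • j)
    (hJ2 : ∀ x : R, ∀ j ∈ J, x * j = aug x * j)
    (hJ3 : ∀ x : R, ∀ j ∈ J, aug x * j ∈ J) :
    (∀ j ∈ J, aug j = 0) ∧
    (∀ j ∈ J, ∀ j' ∈ J, j * j' = 0) ∧
    (∀ x : R, ∀ j ∈ J, x * j ∈ J) ∧
    (∀ L : R, IsUnit L → (∀ n : ℕ, 1 ≤ n → psi n L = L ^ n) →
      ∀ j ∈ J, IsUnit (L + j) ∧ ∀ n : ℕ, 1 ≤ n → psi n (L + j) = (L + j) ^ n) ∧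
    (∀ L : R, ∀ j ∈ J, L + j = L → j = 0) := by
  have haug_two := haugpsi 2 one_le_two
  have haug_J : ∀ j ∈ J, aug j = 0 := fun j hj =>
    aug_eq_zero_of_psi_eq_two_nsmul haug_two (hJ1 2 one_le_two j hj)
  have hmul_J : ∀ j ∈ J, ∀ j' ∈ J, j * j' = 0 := fun j hj j' hj' => by
    rw [hJ2 j j' hj', haug_J j hj, zero_mul]
  refine ⟨haug_J, hmul_J, fun x j hj => hJ2 x j hj ▸ hJ3 x j hj, fun L hL hψL j hj => ?_,
    fun L j _ h => add_eq_left.mp h⟩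
  have hLj : L * j = j := by
    rw [hJ2 L j hj, aug_eq_one_of_psi_eq_sq haug_two hL (hψL 2 one_le_two), one_mul]
  have hjj := hmul_J j hj j hj
  refine ⟨hL.add_of_mul_self_eq_zero hjj, fun n hn => ?_⟩
  rw [map_add, hψL n hn, hJ1 n hn j hj, add_pow_eq_of_mul_eq_self hLj hjj, nsmul_eq_mul]

theorem translation_group_properties
    {R : Type*} [CommRing R]
    -- augmented ψ-ring structure
    (psi : ℕ → R →+* R) (aug : R →+* R)
    (hpsi1 : psi 1 = RingHom.id R)
    (hpsicomp : ∀ m n : ℕ, 1 ≤ m → 1 ≤ n → (psi m).comp (psi n) = psi (m * n))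
    (haug : aug.comp aug = aug)
    (haugpsi : ∀ n : ℕ, 1 ≤ n → aug.comp (psi n) = aug)
    (hpsiaug : ∀ n : ℕ, 1 ≤ n → (psi n).comp aug = aug)
    -- translation group axioms
    (J : AddSubgroup R)
    (hJ1 : ∀ n : ℕ, 1 ≤ n → ∀ j ∈ J, psi n j = n • j)
    (hJ2 : ∀ x : R, ∀ j ∈ J, x * j = aug x * j)
    (hJ3 : ∀ x : R, ∀ j ∈ J, aug x * j ∈ J) :
    (∀ j ∈ J, aug j = 0) ∧
    (∀ j ∈ J, ∀ j' ∈ J, j * j' = 0) ∧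
    (∀ x : R, ∀ j ∈ J, x * j ∈ J) ∧
    (∀ L : R, IsUnit L → (∀ n : ℕ, 1 ≤ n → psi n L = L ^ n) →
      ∀ j ∈ J, IsUnit (L + j) ∧ ∀ n : ℕ, 1 ≤ n → psi n (L + j) = (L + j) ^ n) ∧
    (∀ L : R, ∀ j ∈ J, L + j = L → j = 0) :=
  translation_group_properties_general psi aug haugpsi J hJ1 hJ2 hJ3
end

section
/- Let R be an augmented ψ-ring, n ≥ 1 an integer, J a translation group of R, and j̄ : R → J an additive map such that ψ^{nk+a}(x) = ψ^a(x) + k·j̄(x) for all x ∈ R, all integers k ≥ 0 and all a ∈ {0,1,…,n−1}, where ψ^0 := aug. If L ∈ R is a unit with aug(L) = 1 and ψ^ℓ(L) = L^ℓ for all ℓ ∈ {1,…,n}, then ψ^ℓ(L) = L^ℓ for all integers ℓ ≥ 1; that is, L is a λ-line element. -/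
/-!
STATEMENT 6: Let `R` be an augmented ψ-ring (with `ψ^0 := aug`), `n ≥ 1`,
`J` a translation group of `R`, and `j̄ : R → J` an additive map with
`ψ^{nk+a}(x) = ψ^a(x) + k·j̄(x)` for all `x`, `k ≥ 0` and `0 ≤ a ≤ n-1`.
If `L` is a unit with `aug L = 1` and `ψ^ℓ(L) = L^ℓ` for `ℓ ∈ {1, …, n}`,
then `ψ^ℓ(L) = L^ℓ` for all `ℓ ≥ 1`, i.e. `L` is a λ-line element.
-/

theorem line_element_from_finitely_many_adams_conditions
    {R : Type*} [CommRing R]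
    -- augmented ψ-ring structure, with ψ^0 = aug
    (psi : ℕ → R →+* R) (aug : R →+* R)
    (hpsi0 : psi 0 = aug)
    (hpsi1 : psi 1 = RingHom.id R)
    (hpsicomp : ∀ m k : ℕ, 1 ≤ m → 1 ≤ k → (psi m).comp (psi k) = psi (m * k))
    (haug : aug.comp aug = aug)
    (haugpsi : ∀ k : ℕ, 1 ≤ k → aug.comp (psi k) = aug)
    (hpsiaug : ∀ k : ℕ, 1 ≤ k → (psi k).comp aug = aug)
    (n : ℕ) (hn : 1 ≤ n)
    -- translation group axioms
    (J : AddSubgroup R)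
    (hJ1 : ∀ k : ℕ, 1 ≤ k → ∀ j ∈ J, psi k j = k • j)
    (hJ2 : ∀ x : R, ∀ j ∈ J, x * j = aug x * j)
    (hJ3 : ∀ x : R, ∀ j ∈ J, aug x * j ∈ J)
    -- the additive map j̄ : R → J and the near-periodicity of ψ
    (jbar : R →+ R) (hjbarJ : ∀ x : R, jbar x ∈ J)
    (hperiod : ∀ (x : R) (k a : ℕ), a < n →
      psi (n * k + a) x = psi a x + k • jbar x)
    -- L is a unit with aug L = 1 satisfying the line condition up to n
    (L : R) (hL : IsUnit L) (hLaug : aug L = 1)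
    (hLn : ∀ ℓ : ℕ, 1 ≤ ℓ → ℓ ≤ n → psi ℓ L = L ^ ℓ) :
    ∀ ℓ : ℕ, 1 ≤ ℓ → psi ℓ L = L ^ ℓ := by
  set j : R := L ^ n - 1 with hj
  have hjbar : jbar L = j := by
    have h := hperiod L 1 0 hn
    rw [hpsi0, hLaug, one_smul] at h
    have hn' : psi (n * 1 + 0) L = L ^ n := by
      rw [Nat.mul_one, Nat.add_zero]; exact hLn n hn le_rfl
    rw [hn'] at h
    rw [hj]; linear_combination -h
  have hjJ : j ∈ J := hjbar ▸ hjbarJ L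
  have haugj : aug j = 0 := by
    rw [hj, map_sub, map_pow, hLaug, map_one, one_pow, sub_self]
  have hjj : j * j = 0 := by rw [hJ2 j j hjJ, haugj, zero_mul]
  have hLaj : ∀ a : ℕ, L ^ a * j = j := by
    intro a
    rw [hJ2 (L ^ a) j hjJ, map_pow, hLaug, one_pow, one_mul]
  have hpow : ∀ k : ℕ, (1 + j) ^ k = 1 + (k : R) * j := by
    intro k
    induction k with
    | zero => simp
    | succ k ih =>
      rw [pow_succ, ih, Nat.cast_succ]
      linear_combination (k : R) * hjj
  have hLn1 : L ^ n = 1 + j := by rw [hj]; ring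
  intro ℓ hℓ
  have ha : ℓ % n < n := Nat.mod_lt _ (by omega)
  have hdm : n * (ℓ / n) + ℓ % n = ℓ := Nat.div_add_mod ℓ n
  have hmod : psi (ℓ % n) L = L ^ (ℓ % n) := by
    rcases Nat.eq_zero_or_pos (ℓ % n) with h0 | h1
    · rw [h0, hpsi0, hLaug, pow_zero]
    · exact hLn _ h1 (le_of_lt ha)
  have h := hperiod L (ℓ / n) (ℓ % n) ha
  rw [hdm, hmod, hjbar] at h
  have hLl : L ^ ℓ = L ^ (ℓ % n) + (ℓ / n : R) * j := by
    have : L ^ ℓ = (L ^ n) ^ (ℓ / n) * L ^ (ℓ % n) := by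
      rw [← pow_mul, ← pow_add, hdm]
    rw [this, hLn1, hpow]
    linear_combination (ℓ / n : R) * hLaj (ℓ % n)
  rw [h, hLl, nsmul_eq_mul]
end

section
/- Let R be an augmented ψ-ring which is a ℚ-algebra, and let J be a translation group of R which is a ℚ-linear subspace of R. Let F ∈ R be a λ-line element (a unit with aug(F) = 1 and ψ^ℓ(F) = F^ℓ for all ℓ ≥ 1), let n ≥ 1, and suppose F^n = 1 + j₀ for some j₀ ∈ J. Then there is a unique element j ∈ J such that (F + j)^n = 1, namely j = −j₀/n; in particular the J-orbit {F + j : j ∈ J} contains a unique element whose n-th power is 1. -/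
/-!
STATEMENT 7: Let `R` be an augmented ψ-ring which is a ℚ-algebra and `J` a
translation group which is a ℚ-linear subspace.  Let `F` be a λ-line element,
`n ≥ 1`, and suppose `F^n = 1 + j₀` with `j₀ ∈ J`.  Then there is a unique
`j ∈ J` with `(F + j)^n = 1`, namely `j = -j₀/n`; in particular the `J`-orbit
of `F` contains a unique element whose `n`-th power is `1`.
-/

theorem unique_nth_root_of_unity_in_J_orbit
    {R : Type*} [CommRing R] [Algebra ℚ R]
    -- augmented ψ-ring structure
    (psi : ℕ → R →+* R) (aug : R →+* R)
    (hpsi1 : psi 1 = RingHom.id R)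
    (hpsicomp : ∀ m k : ℕ, 1 ≤ m → 1 ≤ k → (psi m).comp (psi k) = psi (m * k))
    (haug : aug.comp aug = aug)
    (haugpsi : ∀ k : ℕ, 1 ≤ k → aug.comp (psi k) = aug)
    (hpsiaug : ∀ k : ℕ, 1 ≤ k → (psi k).comp aug = aug)
    -- translation group which is a ℚ-subspace
    (J : Submodule ℚ R)
    (hJ1 : ∀ k : ℕ, 1 ≤ k → ∀ j ∈ J, psi k j = k • j)
    (hJ2 : ∀ x : R, ∀ j ∈ J, x * j = aug x * j)
    (hJ3 : ∀ x : R, ∀ j ∈ J, aug x * j ∈ J)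
    -- F is a λ-line element
    (F : R) (hF : IsUnit F) (hFaug : aug F = 1)
    (hFpsi : ∀ ℓ : ℕ, 1 ≤ ℓ → psi ℓ F = F ^ ℓ)
    (n : ℕ) (hn : 1 ≤ n) (j₀ : R) (hj₀ : j₀ ∈ J)
    (hFn : F ^ n = 1 + j₀) :
    ((-(n : ℚ)⁻¹ • j₀) ∈ J) ∧
    (F + (-(n : ℚ)⁻¹ • j₀)) ^ n = 1 ∧
    (∀ j ∈ J, (F + j) ^ n = 1 → j = -(n : ℚ)⁻¹ • j₀) := by
  have haugJ : ∀ j ∈ J, aug j = 0 := by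
    intro j hj
    have h2 : psi 2 j = (2 : ℕ) • j := hJ1 2 (by norm_num) j hj
    have h : aug (psi 2 j) = aug j := RingHom.congr_fun (haugpsi 2 (by norm_num)) j
    rw [h2, two_smul, map_add] at h
    exact add_eq_left.mp h
  have hjj : ∀ j ∈ J, ∀ j' ∈ J, j * j' = 0 := by
    intro j hj j' hj'
    rw [hJ2 j j' hj', haugJ j hj, zero_mul]
  have hFkj : ∀ (k : ℕ) (j : R), j ∈ J → F ^ k * j = j := by
    intro k j hj
    rw [hJ2 (F ^ k) j hj, map_pow, hFaug, one_pow, one_mul]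
  have key : ∀ j ∈ J, ∀ k : ℕ, (F + j) ^ k = F ^ k + (k : ℕ) • j := by
    intro j hj k
    induction k with
    | zero => simp
    | succ k ih =>
      rw [pow_succ, ih, add_mul, mul_add, mul_add, hFkj k j hj,
        smul_mul_assoc, smul_mul_assoc, hjj j hj j hj,
        mul_comm j F, ← pow_one F]
      rw [hFkj 1 j hj, smul_zero, add_zero, ← pow_succ]
      rw [succ_nsmul]
      ring
  have hnQ : (n : ℚ) ≠ 0 := Nat.cast_ne_zero.mpr (by omega)
  have hmem : (-(n : ℚ)⁻¹ • j₀) ∈ J := J.smul_mem _ hj₀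
  have hcancel : (n : ℕ) • (-(n : ℚ)⁻¹ • j₀) = -j₀ := by
    rw [← Nat.cast_smul_eq_nsmul ℚ, smul_smul]
    rw [show (n : ℚ) * -(n : ℚ)⁻¹ = -1 by field_simp]
    simp
  refine ⟨hmem, ?_, ?_⟩
  · rw [key _ hmem n, hFn, hcancel]; ring
  · intro j hj h1
    rw [key j hj n, hFn] at h1
    have : (n : ℕ) • j = -j₀ := by
      linear_combination h1
    have h2 : (n : ℚ) • j = -j₀ := by rwa [Nat.cast_smul_eq_nsmul]
    have := congrArg (fun x => (n : ℚ)⁻¹ • x) h2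
    simp only [smul_smul, inv_mul_cancel₀ hnQ, one_smul] at this
    rw [this, smul_neg, neg_smul]
end

section
/- Let n ≥ 1 be an integer. In the quotient ring ℤ[x]/((x−1)(x^n−1)), for all integers k ≥ 0, a with 0 ≤ a ≤ n−1, and s ≥ 0, one has the identity x^{(nk+a)s} = x^{as} + k·s·(x^n − 1). -/
/-!
STATEMENT 10: Let `n ≥ 1`.  In `ℤ[x]/((x-1)(x^n-1))`, for all `k ≥ 0`,
`0 ≤ a ≤ n-1` and `s ≥ 0`, one has `x^{(nk+a)s} = x^{as} + k·s·(x^n - 1)`.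
-/

open Polynomial in
private lemma aux_step (n : ℕ) (K m : ℕ) :
    Ideal.Quotient.mk
        (Ideal.span {((X : Polynomial ℤ) - 1) * (X ^ n - 1)}) (X ^ (n * K + m))
      = Ideal.Quotient.mk (Ideal.span {((X : Polynomial ℤ) - 1) * (X ^ n - 1)}) (X ^ m)
        + K • Ideal.Quotient.mk (Ideal.span {((X : Polynomial ℤ) - 1) * (X ^ n - 1)})
            (X ^ n - 1) := by
  induction K with
  | zero => simp
  | succ K ih =>
    have hstep : Ideal.Quotient.mk
        (Ideal.span {((X : Polynomial ℤ) - 1) * (X ^ n - 1)}) (X ^ (n * K + m + n))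
        = Ideal.Quotient.mk (Ideal.span {((X : Polynomial ℤ) - 1) * (X ^ n - 1)})
            (X ^ (n * K + m) + (X ^ n - 1)) := by
      rw [Ideal.Quotient.eq, Ideal.mem_span_singleton]
      have : (X : Polynomial ℤ) ^ (n * K + m + n) - (X ^ (n * K + m) + (X ^ n - 1))
          = (X ^ (n * K + m) - 1) * (X ^ n - 1) := by ring
      rw [this]
      exact mul_dvd_mul (by simpa using sub_dvd_pow_sub_pow (X : Polynomial ℤ) 1 (n * K + m))
        dvd_rfl
    have : n * (K + 1) + m = n * K + m + n := by ring
    rw [this, hstep, map_add, ih, succ_nsmul]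
    ring

theorem untwisted_sector_adams_periodicity
    (n : ℕ) (hn : 1 ≤ n) (k a s : ℕ) (ha : a ≤ n - 1) :
    Ideal.Quotient.mk
        (Ideal.span {((Polynomial.X : Polynomial ℤ) - 1) * (Polynomial.X ^ n - 1)})
        (Polynomial.X ^ ((n * k + a) * s))
      = Ideal.Quotient.mk
          (Ideal.span {((Polynomial.X : Polynomial ℤ) - 1) * (Polynomial.X ^ n - 1)})
          (Polynomial.X ^ (a * s))
        + (k * s) •
          Ideal.Quotient.mk
            (Ideal.span {((Polynomial.X : Polynomial ℤ) - 1) * (Polynomial.X ^ n - 1)})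
            (Polynomial.X ^ n - 1) := by
  have h : (n * k + a) * s = n * (k * s) + a * s := by ring
  rw [h]
  exact aux_step n (k * s) (a * s)
end

section
/- Let n ≥ 2 be an integer. In the quotient ring ℤ[x]/(x^n − 1), where the image of x is a unit, for all integers k ≥ 0, a with 1 ≤ a ≤ n−1, and s ≥ 0, one has the identity x^{(nk+a)s} · (Σ_{j=0}^{nk+a−1} x^{−j}) = x^{as} · (Σ_{j=0}^{a−1} x^{−j}) + k · (Σ_{i=0}^{n−1} x^i). -/
/-!
STATEMENT 11: Let `n ≥ 2`.  In `ℤ[x]/(x^n - 1)` (where `x` is a unit with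
`x^{-1} = x^{n-1}`), for all `k ≥ 0`, `1 ≤ a ≤ n-1` and `s ≥ 0`, one has
`x^{(nk+a)s}·(∑_{j<nk+a} x^{-j}) = x^{as}·(∑_{j<a} x^{-j}) + k·(∑_{i<n} x^i)`.
-/

theorem twisted_sector_adams_periodicity
    (n : ℕ) (hn : 2 ≤ n) (k a s : ℕ) (ha1 : 1 ≤ a) (ha2 : a ≤ n - 1)
    (x xinv : Polynomial ℤ ⧸ Ideal.span {(Polynomial.X : Polynomial ℤ) ^ n - 1})
    (hx : x = Ideal.Quotient.mk _ Polynomial.X)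
    (hxinv : xinv = Ideal.Quotient.mk _ (Polynomial.X ^ (n - 1))) :
    x ^ ((n * k + a) * s) * (∑ j ∈ Finset.range (n * k + a), xinv ^ j)
      = x ^ (a * s) * (∑ j ∈ Finset.range a, xinv ^ j)
        + k • ∑ i ∈ Finset.range n, x ^ i := by
  -- basic facts
  have hxi : xinv = x ^ (n - 1) := by rw [hx, hxinv, map_pow]
  have hxn : x ^ n = 1 := by
    have h0 : (Ideal.Quotient.mk (Ideal.span {(Polynomial.X : Polynomial ℤ) ^ n - 1}))
        ((Polynomial.X : Polynomial ℤ) ^ n - 1) = 0 :=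
      Ideal.Quotient.eq_zero_iff_mem.2 (Ideal.subset_span rfl)
    rw [map_sub, map_pow, map_one, sub_eq_zero] at h0
    rw [hx, h0]
  have hxxinv : x * xinv = 1 := by
    have h1 : n - 1 + 1 = n := by omega
    rw [hxi, ← pow_succ', h1, hxn]
  set Δ' : Polynomial ℤ ⧸ Ideal.span {(Polynomial.X : Polynomial ℤ) ^ n - 1} :=
    ∑ j ∈ Finset.range n, xinv ^ j with hΔ'
  have hxinvn : xinv ^ n = 1 := by
    rw [hxi, ← pow_mul, mul_comm, pow_mul, hxn, one_pow]
  have hgeom : Δ' * (xinv - 1) = 0 := by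
    rw [hΔ', geom_sum_mul, hxinvn, sub_self]
  have hinvΔ' : xinv * Δ' = Δ' := by
    have := hgeom
    rw [mul_sub, mul_one, sub_eq_zero] at this
    rw [mul_comm]; exact this
  have hxΔ' : x * Δ' = Δ' := by
    conv_lhs => rw [← hinvΔ', ← mul_assoc, hxxinv, one_mul]
  have hpowΔ' : ∀ m : ℕ, x ^ m * Δ' = Δ' := by
    intro m
    induction m with
    | zero => simp
    | succ m ih => rw [pow_succ, mul_assoc, hxΔ', ih]
  have hinvpowΔ' : ∀ m : ℕ, xinv ^ m * Δ' = Δ' := by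
    intro m
    rw [hxi, ← pow_mul, hpowΔ']
  have hΔ'Δ : Δ' = ∑ i ∈ Finset.range n, x ^ i := by
    calc Δ' = x ^ (n - 1) * Δ' := (hpowΔ' (n - 1)).symm
    _ = ∑ j ∈ Finset.range n, x ^ (n - 1) * xinv ^ j := by rw [Finset.mul_sum]
    _ = ∑ j ∈ Finset.range n, x ^ (n - 1 - j) := by
        refine Finset.sum_congr rfl fun j hj => ?_
        have hjn : j ≤ n - 1 := by
          have := Finset.mem_range.1 hj; omega
        have : x ^ (n - 1) = x ^ (n - 1 - j) * x ^ j := by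
          rw [← pow_add]; congr 1; omega
        rw [this, mul_assoc, ← mul_pow, hxxinv, one_pow, mul_one]
    _ = ∑ i ∈ Finset.range n, x ^ i := Finset.sum_range_reflect (fun i => x ^ i) n
  -- main induction on k
  induction k with
  | zero => simp
  | succ k ih =>
    have hsplit : n * (k + 1) + a = (n * k + a) + n := by ring
    have hns : x ^ (n * s) = 1 := by rw [pow_mul, hxn, one_pow]
    rw [hsplit, Finset.sum_range_add, add_mul, pow_add, hns, mul_one]
    have hshift : ∑ j ∈ Finset.range n, xinv ^ (n * k + a + j)
        = xinv ^ (n * k + a) * Δ' := by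
      rw [hΔ', Finset.mul_sum]
      exact Finset.sum_congr rfl fun j _ => by rw [pow_add]
    rw [hshift, mul_add, ih, ← mul_assoc, mul_comm (x ^ ((n * k + a) * s)) (xinv ^ (n * k + a)),
      mul_assoc, hpowΔ', hinvpowΔ', hΔ'Δ, succ_nsmul]
    ring
end

section
/- Let V₄ = ℤ/2 × ℤ/2, let R = ℚ[V₄] be its group algebra with canonical basis {e_{(m,a)} : (m,a) ∈ V₄}, and for n ≥ 1 let ψ^n : R → R be the ℚ-linear map with ψ^n(e_{(m,a)}) = e_{(m, n·a)}. Define λ_t(x) := exp(Σ_{r≥1} (−1)^{r−1} ψ^r(x) t^r / r) ∈ R[[t]]. Then λ_t(e_{(1,0)}) = 1 + t·e_{(1,0)} + (t²/(2(1+t)))·(1 − e_{(1,0)}), where 1/(1+t) denotes the power series Σ_{k≥0} (−1)^k t^k in ℚ[[t]]. -/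
/-!
STATEMENT 12: Let `V₄ = ℤ/2 × ℤ/2`, `R = ℚ[V₄]` its group algebra with basis
`e_{(m,a)}`, and for `n ≥ 1` let `ψ^n : R → R` be the ℚ-linear map with
`ψ^n(e_{(m,a)}) = e_{(m, n·a)}`.  Define
`λ_t(x) = exp (∑_{r≥1} (-1)^{r-1} ψ^r(x) t^r / r) ∈ R[[t]]`.  Then
`λ_t(e_{(1,0)}) = 1 + t·e_{(1,0)} + (t²/(2(1+t)))·(1 - e_{(1,0)})`,
where `1/(1+t) = ∑_{k≥0} (-1)^k t^k`.
-/

/-- The group algebra `ℚ[ℤ/2 × ℤ/2]`. -/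
abbrev GroupAlgV4 : Type := AddMonoidAlgebra ℚ (ZMod 2 × ZMod 2)

/-- The canonical basis element `e_{(m,a)}` of `ℚ[ℤ/2 × ℤ/2]`. -/
noncomputable def eV4 (p : ZMod 2 × ZMod 2) : GroupAlgV4 :=
  AddMonoidAlgebra.single p 1

/-- The exponential `exp S = ∑_{k ≥ 0} S^k / k!` of a formal power series `S`
with zero constant term, over a `ℚ`-algebra. -/
noncomputable def PowerSeriesExp {R : Type*} [CommRing R] [Algebra ℚ R]
    (S : PowerSeries R) : PowerSeries R :=
  PowerSeries.mk fun n =>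
    ∑ k ∈ Finset.range (n + 1), ((k.factorial : ℚ)⁻¹) • PowerSeries.coeff (R := R) n (S ^ k)

/-!
Both sides solve `(1 + X) f' = e f` with `f(0) = 1`, where `e = e_{(1,0)}`. Since `ψ^r` fixes
`e`, the exponent is `e · log (1 + X)`, so `(exp S)' = S' exp S = e/(1 + X) · exp S`; the closed
form satisfies the same equation because `e² = 1`. A solution of `f' = h f` over a torsion-free
ring is determined by its constant coefficient.
-/

open PowerSeries

namespace PowerSeries

variable {R : Type*} [CommRing R]

theorem eq_of_derivative_eq_mul [IsAddTorsionFree R] {f g h : R⟦X⟧}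
    (hf : d⁄dX R f = h * f) (hg : d⁄dX R g = h * g)
    (h₀ : constantCoeff f = constantCoeff g) : f = g := by
  ext n
  induction n using Nat.strong_induction_on with
  | _ n ih =>
  cases n with
  | zero => simpa using h₀
  | succ n =>
    have hcoeff : coeff n (d⁄dX R f) = coeff n (d⁄dX R g) := by
      rw [hf, hg, coeff_mul, coeff_mul]
      refine Finset.sum_congr rfl fun p hp => ?_
      rw [ih p.2 (Finset.Nat.antidiagonal.snd_lt hp)]
    rw [coeff_derivative, coeff_derivative, ← Nat.cast_succ, mul_comm, ← nsmul_eq_mul,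
      mul_comm, ← nsmul_eq_mul] at hcoeff
    exact (smul_right_inj n.succ_ne_zero).mp hcoeff

variable [Algebra ℚ R]

theorem derivative_log_eq_mk_smul_one :
    d⁄dX R (log R) = mk fun k => (-1 : ℚ) ^ k • (1 : R) := by
  simp only [deriv_log, Algebra.algebraMap_eq_smul_one]

theorem one_add_X_mul_derivative_log : (1 + X) * d⁄dX R (log R) = 1 := by
  ext (_ | n)
  · simp [deriv_log]
  · simp [add_mul, coeff_succ_X_mul, deriv_log, pow_succ]

end PowerSeries

section

variable {R : Type*} [CommRing R] [Algebra ℚ R]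

theorem powerSeriesExp_eq_subst {S : R⟦X⟧} (hS : constantCoeff S = 0) :
    PowerSeriesExp S = (exp R).subst S := by
  ext n
  rw [coeff_subst' (HasSubst.of_constantCoeff_zero' hS), PowerSeriesExp, coeff_mk,
    finsum_eq_sum_of_support_subset (s := Finset.range (n + 1))]
  · refine Finset.sum_congr rfl fun k _ => ?_
    rw [coeff_exp, algebraMap_smul, one_div]
  · refine Function.support_subset_iff'.mpr fun k hk => ?_
    rw [coeff_of_lt_order n ((Nat.cast_lt.mpr (by simpa using hk)).trans_le
      (le_order_pow_of_constantCoeff_eq_zero k hS)), smul_zero]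

theorem derivative_powerSeriesExp {S : R⟦X⟧} (hS : constantCoeff S = 0) :
    d⁄dX R (PowerSeriesExp S) = PowerSeriesExp S * d⁄dX R S := by
  rw [powerSeriesExp_eq_subst hS, derivative_subst (HasSubst.of_constantCoeff_zero' hS),
    derivative_exp]

theorem constantCoeff_powerSeriesExp (S : R⟦X⟧) : constantCoeff (PowerSeriesExp S) = 1 := by
  rw [← coeff_zero_eq_constantCoeff_apply, PowerSeriesExp, coeff_mk]
  simp

/-- `λ_t(e)` for `e² = 1`; the middle factor is `1 / (1 + X) = d⁄dX (log R)`. -/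
noncomputable def lambdaOfInvolution (e : R) : R⟦X⟧ :=
  1 + X * C e + (1 / 2 : ℚ) • (X ^ 2 * (mk fun k => (-1 : ℚ) ^ k • (1 : R)) * C (1 - e))

theorem derivative_lambdaOfInvolution {e : R} (he : e * e = 1) :
    d⁄dX R (lambdaOfInvolution e) = C e * d⁄dX R (log R) * lambdaOfInvolution e := by
  rw [lambdaOfInvolution, ← derivative_log_eq_mk_smul_one, ← algebraMap_smul R, smul_eq_C_mul]
  set G := d⁄dX R (log R)
  set c : R := algebraMap ℚ R (1 / 2)
  set T := 1 + X * C e + C c * (X ^ 2 * G * C (1 - e))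
  have hG : (1 + X) * G = 1 := one_add_X_mul_derivative_log
  have hdG : G + (1 + X) * d⁄dX R G = 0 := by
    simpa [Derivation.leibniz, add_comm, mul_comm] using congrArg (d⁄dX R) hG
  have hE : C e * C e = 1 := by rw [← map_mul, he, map_one]
  have hc : C c * 2 = 1 := by
    rw [← map_ofNat C 2, ← map_mul, ← map_ofNat (algebraMap ℚ R) 2, ← map_mul]
    norm_num
  have hT : (1 + X) * d⁄dX R T = C e * T := by
    simp only [T, map_add, map_sub, map_one, Derivation.leibniz, derivative_C, derivative_X,
      derivative_one, smul_eq_mul, Derivation.leibniz_pow]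
    linear_combination (2 * C c * X * (1 - C e)) * hG + (C c * X ^ 2 * (1 - C e)) * hdG
      + (C c * X ^ 2 * G - X) * hE + (X * (1 - C e)) * hc
  calc d⁄dX R T = G * ((1 + X) * d⁄dX R T) := by rw [← mul_assoc, mul_comm G, hG, one_mul]
    _ = C e * G * T := by rw [hT]; ring

end

theorem eV4_mul_self (m : ZMod 2) : eV4 (m, 0) * eV4 (m, 0) = 1 := by
  rw [eV4, AddMonoidAlgebra.single_mul_single, one_mul, AddMonoidAlgebra.one_def]
  congr 1
  ext <;> simp [CharTwo.add_self_eq_zero]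

theorem orbifold_lambda_of_e10
    (psi : ℕ → GroupAlgV4 →ₗ[ℚ] GroupAlgV4)
    (hpsi : ∀ n : ℕ, 1 ≤ n → ∀ p : ZMod 2 × ZMod 2,
      psi n (eV4 p) = eV4 (p.1, n • p.2)) :
    PowerSeriesExp
        (PowerSeries.mk fun r =>
          if r = 0 then 0
          else ((-1 : ℚ) ^ (r - 1) / r) • psi r (eV4 (1, 0)))
      = 1 + PowerSeries.X * PowerSeries.C (R := GroupAlgV4) (eV4 (1, 0))
          + (1 / 2 : ℚ) •
            (PowerSeries.X ^ 2 *
              (PowerSeries.mk fun k => ((-1 : ℚ) ^ k) • (1 : GroupAlgV4)) *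
              PowerSeries.C (R := GroupAlgV4) (1 - eV4 (1, 0))) := by
  set e := eV4 (1, 0)
  have hS : (mk fun r => if r = 0 then 0 else ((-1 : ℚ) ^ (r - 1) / r) • psi r e)
      = C e * log GroupAlgV4 := by
    refine PowerSeries.ext fun r => ?_
    rcases r with _ | r
    · simp
    · rw [coeff_mk, coeff_C_mul, coeff_log, if_neg r.succ_ne_zero, if_neg r.succ_ne_zero,
        hpsi _ (Nat.le_add_left 1 r), smul_zero, mul_comm, ← Algebra.smul_def]
      congr 1
      simp [pow_succ]
  have hS₀ : constantCoeff (C e * log GroupAlgV4) = 0 := by simp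
  have : IsAddTorsionFree GroupAlgV4 := .of_module_rat _
  rw [hS]
  refine eq_of_derivative_eq_mul (h := C e * d⁄dX _ (log _)) ?_
    (derivative_lambdaOfInvolution (eV4_mul_self 1)) ?_
  · rw [derivative_powerSeriesExp hS₀, Derivation.leibniz, derivative_C, smul_zero, add_zero,
      smul_eq_mul, mul_comm]
  · rw [constantCoeff_powerSeriesExp]
    simp
end

section
/- Let V₄ = ℤ/2 × ℤ/2, let R = ℚ[V₄] be its group algebra with canonical basis {e_{(m,a)} : (m,a) ∈ V₄}, and for n ≥ 1 let ψ^n : R → R be the ℚ-linear map with ψ^n(e_{(m,a)}) = e_{(m, n·a)}. Set σ₊ := (1/2)(e_{(0,0)} + e_{(0,1)} + e_{(1,0)} − e_{(1,1)}) and σ₋ := (1/2)(e_{(0,0)} + e_{(0,1)} − e_{(1,0)} + e_{(1,1)}). Then the set of units L ∈ R satisfying ψ^n(L) = L^n for all n ≥ 1 is exactly the four-element set {e_{(0,0)}, e_{(0,1)}, σ₊, σ₋}; moreover σ₊·σ₊ = σ₋·σ₋ = e_{(0,0)}, σ₊·σ₋ = e_{(0,1)}, e_{(0,1)}·σ₊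 = σ₋, and e_{(0,1)}·σ₋ = σ₊. -/
/-- `σ₊ = (1/2)(e_{(0,0)} + e_{(0,1)} + e_{(1,0)} - e_{(1,1)})`. -/
noncomputable def sigmaPlus : GroupAlgV4 :=
  (1 / 2 : ℚ) • (eV4 (0, 0) + eV4 (0, 1) + eV4 (1, 0) - eV4 (1, 1))

/-- `σ₋ = (1/2)(e_{(0,0)} + e_{(0,1)} - e_{(1,0)} + e_{(1,1)})`. -/
noncomputable def sigmaMinus : GroupAlgV4 :=
  (1 / 2 : ℚ) • (eV4 (0, 0) + eV4 (0, 1) - eV4 (1, 0) + eV4 (1, 1))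

/-!
Only the parity of `n` matters: `ψ^n` is the identity for odd `n` and equals `ψ²` for even
`n ≥ 2`. Comparing `ψ²(L) = L²` with `ψ⁴(L) = L⁴` and cancelling the unit `L²` shows that the
line elements are exactly the `L` with `L² = 1` and `ψ²(L) = 1`. With `x = e_{(0,1)}`,
`y = e_{(1,0)}` and `P, Q = (1 ± x)/2`, the solutions of `ψ²(L) = 1` are `L = P + (s + t y) Q`,
and `s + t y ↦ P + (s + t y) Q` is multiplicative on `ℚ[y] = ℚ[ℤ/2]`. So `L² = 1` becomes
`s² + t² = 1, 2st = 0`, whose solutions `(1, 0), (-1, 0), (0, 1), (0, -1)` give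
`1, x, σ₊, σ₋`.
-/

theorem isUnit_and_forall_apply_eq_pow_iff {M : Type*} [Monoid M] (f : ℕ → M → M)
    (hodd : ∀ n, Odd n → f n = id) (heven : ∀ n, Even n → n ≠ 0 → f n = f 2) (L : M) :
    (IsUnit L ∧ ∀ n, 1 ≤ n → f n L = L ^ n) ↔ L * L = 1 ∧ f 2 L = 1 := by
  constructor
  · rintro ⟨hU, hL⟩
    have h24 : L ^ 2 * L ^ 2 = L ^ 2 * 1 := by
      rw [mul_one, ← pow_add, ← hL 2 (by norm_num), ← hL 4 (by norm_num),
        heven 4 (by decide) (by decide)]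
    have hsq : L * L = 1 := by rw [← sq]; exact (hU.pow 2).mul_right_inj.1 h24
    exact ⟨hsq, by rw [hL 2 (by norm_num), sq, hsq]⟩
  · rintro ⟨hsq, h2⟩
    refine ⟨(Units.mk L L hsq hsq).isUnit, fun n hn => ?_⟩
    obtain ⟨k, rfl | rfl⟩ := Nat.even_or_odd' n
    · rw [heven _ (even_two_mul k) (by omega), h2, pow_mul, sq, hsq, one_pow]
    · rw [hodd _ (odd_two_mul_add_one k), pow_succ, pow_mul, sq, hsq, one_pow, one_mul, id]

theorem mul_self_add_mul_self_eq_one_and_add_eq_zero_iff {R : Type*} [CommRing R] [IsDomain R]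
    [NeZero (2 : R)] {s t : R} :
    s * s + t * t = 1 ∧ s * t + t * s = 0 ↔
      (s = 1 ∧ t = 0) ∨ (s = -1 ∧ t = 0) ∨ (s = 0 ∧ t = 1) ∨ (s = 0 ∧ t = -1) := by
  constructor
  · rintro ⟨h1, h2⟩
    have hst : s * t = 0 := by
      rw [mul_comm t, ← two_mul] at h2
      exact (mul_eq_zero.1 h2).resolve_left two_ne_zero
    rcases mul_eq_zero.1 hst with rfl | rfl
    · rw [mul_zero, zero_add, mul_self_eq_one_iff] at h1
      tauto
    · rw [mul_zero, add_zero, mul_self_eq_one_iff] at h1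
      tauto
  · rintro (⟨rfl, rfl⟩ | ⟨rfl, rfl⟩ | ⟨rfl, rfl⟩ | ⟨rfl, rfl⟩) <;> simp

theorem eV4_zero_zero : eV4 (0, 0) = 1 := rfl

theorem eV4_mul (p q : ZMod 2 × ZMod 2) : eV4 p * eV4 q = eV4 (p + q) := by
  simp [eV4]

@[simp]
theorem coeff_eV4 (p q : ZMod 2 × ZMod 2) : (eV4 p).coeff q = if p = q then 1 else 0 := by
  simp [eV4, AddMonoidAlgebra.coeff_single, Finsupp.single_apply]

theorem eq_sum_coeff_smul_eV4 (L : GroupAlgV4) :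
    L = L.coeff (0, 0) • eV4 (0, 0) + L.coeff (0, 1) • eV4 (0, 1)
      + L.coeff (1, 0) • eV4 (1, 0) + L.coeff (1, 1) • eV4 (1, 1) := by
  ext p
  fin_cases p <;> simp +decide <;> rfl

/-- `P + (s + t e_{(1,0)}) Q`, where `P, Q = (1 ± e_{(0,1)}) / 2`. -/
noncomputable def psiTwoFiber (s t : ℚ) : GroupAlgV4 :=
  (1 / 2 : ℚ) • ((1 + s) • eV4 (0, 0) + (1 - s) • eV4 (0, 1) + t • eV4 (1, 0) - t • eV4 (1, 1))

theorem psiTwoFiber_mul (s t s' t' : ℚ) :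
    psiTwoFiber s t * psiTwoFiber s' t' = psiTwoFiber (s * s' + t * t') (s * t' + t * s') := by
  simp only [psiTwoFiber, smul_mul_assoc, mul_smul_comm, smul_smul, sub_mul, mul_sub,
    add_mul, mul_add, eV4_mul]
  ext p
  fin_cases p <;> simp +decide <;> ring

theorem psiTwoFiber_inj {s t s' t' : ℚ} :
    psiTwoFiber s t = psiTwoFiber s' t' ↔ s = s' ∧ t = t' := by
  refine ⟨fun h => ⟨?_, ?_⟩, fun ⟨hs, ht⟩ => hs ▸ ht ▸ rfl⟩
  · simpa +decide [psiTwoFiber] using congrArg (·.coeff (0, 0)) h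
  · simpa +decide [psiTwoFiber] using congrArg (·.coeff (1, 0)) h

theorem psiTwoFiber_one_zero : psiTwoFiber 1 0 = eV4 (0, 0) := by
  simp only [psiTwoFiber]; module

theorem psiTwoFiber_neg_one_zero : psiTwoFiber (-1) 0 = eV4 (0, 1) := by
  simp only [psiTwoFiber]; module

theorem psiTwoFiber_zero_one : psiTwoFiber 0 1 = sigmaPlus := by
  simp only [psiTwoFiber, sigmaPlus]; module

theorem psiTwoFiber_zero_neg_one : psiTwoFiber 0 (-1) = sigmaMinus := by
  simp only [psiTwoFiber, sigmaMinus]; module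

theorem sigmaPlus_mul_sigmaPlus : sigmaPlus * sigmaPlus = eV4 (0, 0) := by
  rw [← psiTwoFiber_zero_one, psiTwoFiber_mul, ← psiTwoFiber_one_zero]; norm_num

theorem sigmaMinus_mul_sigmaMinus : sigmaMinus * sigmaMinus = eV4 (0, 0) := by
  rw [← psiTwoFiber_zero_neg_one, psiTwoFiber_mul, ← psiTwoFiber_one_zero]; norm_num

theorem sigmaPlus_mul_sigmaMinus : sigmaPlus * sigmaMinus = eV4 (0, 1) := by
  rw [← psiTwoFiber_zero_one, ← psiTwoFiber_zero_neg_one, psiTwoFiber_mul,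
    ← psiTwoFiber_neg_one_zero]; norm_num

theorem eV4_zero_one_mul_sigmaPlus : eV4 (0, 1) * sigmaPlus = sigmaMinus := by
  rw [← psiTwoFiber_neg_one_zero, ← psiTwoFiber_zero_one, psiTwoFiber_mul,
    ← psiTwoFiber_zero_neg_one]; norm_num

theorem eV4_zero_one_mul_sigmaMinus : eV4 (0, 1) * sigmaMinus = sigmaPlus := by
  rw [← psiTwoFiber_neg_one_zero, ← psiTwoFiber_zero_neg_one, psiTwoFiber_mul,
    ← psiTwoFiber_zero_one]; norm_num

theorem psiTwoFiber_mul_self_eq_one_iff {s t : ℚ} :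
    psiTwoFiber s t * psiTwoFiber s t = 1 ↔
      psiTwoFiber s t ∈ ({eV4 (0, 0), eV4 (0, 1), sigmaPlus, sigmaMinus} : Set GroupAlgV4) := by
  rw [psiTwoFiber_mul, ← eV4_zero_zero, ← psiTwoFiber_one_zero, psiTwoFiber_inj,
    mul_self_add_mul_self_eq_one_and_add_eq_zero_iff, ← psiTwoFiber_neg_one_zero,
    ← psiTwoFiber_zero_one, ← psiTwoFiber_zero_neg_one]
  simp only [Set.mem_insert_iff, Set.mem_singleton_iff, psiTwoFiber_inj]

theorem mul_self_eq_one_and_exists_psiTwoFiber_iff (L : GroupAlgV4) :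
    (L * L = 1 ∧ ∃ s t, L = psiTwoFiber s t) ↔
      L ∈ ({eV4 (0, 0), eV4 (0, 1), sigmaPlus, sigmaMinus} : Set GroupAlgV4) := by
  constructor
  · rintro ⟨hsq, s, t, rfl⟩
    exact psiTwoFiber_mul_self_eq_one_iff.1 hsq
  · intro hL
    obtain ⟨s, t, rfl⟩ : ∃ s t, L = psiTwoFiber s t := by
      rcases hL with rfl | rfl | rfl | rfl
      exacts [⟨_, _, psiTwoFiber_one_zero.symm⟩, ⟨_, _, psiTwoFiber_neg_one_zero.symm⟩,
        ⟨_, _, psiTwoFiber_zero_one.symm⟩, ⟨_, _, psiTwoFiber_zero_neg_one.symm⟩]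
    exact ⟨psiTwoFiber_mul_self_eq_one_iff.2 hL, _, _, rfl⟩

section AdamsOperations

variable (psi : ℕ → GroupAlgV4 →ₗ[ℚ] GroupAlgV4)

theorem psi_eq_id_of_odd
    (hpsi : ∀ n : ℕ, 1 ≤ n → ∀ p : ZMod 2 × ZMod 2, psi n (eV4 p) = eV4 (p.1, n • p.2))
    {n : ℕ} (hn : Odd n) : psi n = LinearMap.id :=
  (AddMonoidAlgebra.basis _ ℚ).ext fun p => by
    simp [← eV4.eq_def, hpsi n hn.pos, ZMod.natCast_eq_one_iff_odd.2 hn]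

theorem psi_eq_psi_two_of_even
    (hpsi : ∀ n : ℕ, 1 ≤ n → ∀ p : ZMod 2 × ZMod 2, psi n (eV4 p) = eV4 (p.1, n • p.2))
    {n : ℕ} (hn : Even n) (hn0 : n ≠ 0) : psi n = psi 2 :=
  (AddMonoidAlgebra.basis _ ℚ).ext fun p => by
    simp [← eV4.eq_def, hpsi n (Nat.one_le_iff_ne_zero.2 hn0), hpsi 2 one_le_two,
      ZMod.natCast_eq_zero_iff_even.2 hn, CharTwo.two_eq_zero]

theorem psi_two_apply
    (hpsi : ∀ n : ℕ, 1 ≤ n → ∀ p : ZMod 2 × ZMod 2, psi n (eV4 p) = eV4 (p.1, n • p.2))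
    (L : GroupAlgV4) :
    psi 2 L = (L.coeff (0, 0) + L.coeff (0, 1)) • eV4 (0, 0)
      + (L.coeff (1, 0) + L.coeff (1, 1)) • eV4 (1, 0) := by
  have htwo : (2 : ℕ) • (1 : ZMod 2) = 0 := rfl
  conv_lhs => rw [eq_sum_coeff_smul_eV4 L]
  simp only [map_add, map_smul, hpsi 2 one_le_two, htwo, smul_zero]
  module

theorem psi_two_eq_one_iff
    (hpsi : ∀ n : ℕ, 1 ≤ n → ∀ p : ZMod 2 × ZMod 2, psi n (eV4 p) = eV4 (p.1, n • p.2))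
    (L : GroupAlgV4) : psi 2 L = 1 ↔ ∃ s t, L = psiTwoFiber s t := by
  rw [psi_two_apply psi hpsi, ← eV4_zero_zero]
  constructor
  · intro h
    have h00 : L.coeff (0, 0) + L.coeff (0, 1) = 1 := by
      simpa +decide using congrArg (·.coeff (0, 0)) h
    have h10 : L.coeff (1, 0) + L.coeff (1, 1) = 0 := by
      simpa +decide using congrArg (·.coeff (1, 0)) h
    refine ⟨2 * L.coeff (0, 0) - 1, 2 * L.coeff (1, 0), ?_⟩
    conv_lhs => rw [eq_sum_coeff_smul_eV4 L]
    rw [psiTwoFiber, eq_sub_of_add_eq' h00, eq_neg_of_add_eq_zero_right h10]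
    module
  · rintro ⟨s, t, rfl⟩
    norm_num [psiTwoFiber, ← mul_add]

end AdamsOperations

theorem orbifold_line_elements_of_Bmu2
    (psi : ℕ → GroupAlgV4 →ₗ[ℚ] GroupAlgV4)
    (hpsi : ∀ n : ℕ, 1 ≤ n → ∀ p : ZMod 2 × ZMod 2,
      psi n (eV4 p) = eV4 (p.1, n • p.2)) :
    {L : GroupAlgV4 | IsUnit L ∧ ∀ n : ℕ, 1 ≤ n → psi n L = L ^ n}
      = {eV4 (0, 0), eV4 (0, 1), sigmaPlus, sigmaMinus} ∧
    sigmaPlus * sigmaPlus = eV4 (0, 0) ∧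
    sigmaMinus * sigmaMinus = eV4 (0, 0) ∧
    sigmaPlus * sigmaMinus = eV4 (0, 1) ∧
    eV4 (0, 1) * sigmaPlus = sigmaMinus ∧
    eV4 (0, 1) * sigmaMinus = sigmaPlus := by
  refine ⟨?_, sigmaPlus_mul_sigmaPlus, sigmaMinus_mul_sigmaMinus, sigmaPlus_mul_sigmaMinus,
    eV4_zero_one_mul_sigmaPlus, eV4_zero_one_mul_sigmaMinus⟩
  ext L
  have hline := isUnit_and_forall_apply_eq_pow_iff (fun n => psi n)
    (fun n hn => congrArg _ (psi_eq_id_of_odd psi hpsi hn))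
    (fun n hn hn0 => congrArg _ (psi_eq_psi_two_of_even psi hpsi hn hn0)) L
  rw [Set.mem_ofPred_eq, hline, psi_two_eq_one_iff psi hpsi,
    mul_self_eq_one_and_exists_psiTwoFiber_iff]
end

section
/- Let I ⊂ ℚ[S,T] be the ideal generated by (T−1)(T²−1), (S−1)(S²−1), and (S−T)(T−1), and let R₂ = ℚ[S,T]/I. Then the images of 1, S, S², T, T² form a basis of R₂ as a ℚ-vector space (so dim_ℚ R₂ = 5), and the images of S and T are units of R₂, with S·(−S² + S + 1) = 1 and T·(−T² + T + 1) = 1. -/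
/-!
STATEMENT 14: Let `R₂ = ℚ[S,T]/⟨(T-1)(T²-1), (S-1)(S²-1), (S-T)(T-1)⟩`.
Then the images of `1, S, S², T, T²` form a ℚ-basis of `R₂` (so
`dim_ℚ R₂ = 5`), and the images of `S` and `T` are units, with
`S·(-S² + S + 1) = 1` and `T·(-T² + T + 1) = 1`.
-/

open MvPolynomial

/-- The defining ideal of the virtual K-theory of `ℙ(1,2)`:
`⟨(T-1)(T²-1), (S-1)(S²-1), (S-T)(T-1)⟩ ⊆ ℚ[S,T]`, with `S = X 0`, `T = X 1`. -/
noncomputable def virtIdeal2 : Ideal (MvPolynomial (Fin 2) ℚ) :=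
  Ideal.span
    {(X 1 - 1) * ((X 1) ^ 2 - 1),
     (X 0 - 1) * ((X 0) ^ 2 - 1),
     (X 0 - X 1) * (X 1 - 1)}

/-- `R₂ = ℚ[S,T]/⟨(T-1)(T²-1), (S-1)(S²-1), (S-T)(T-1)⟩`. -/
abbrev VirtK2 : Type := MvPolynomial (Fin 2) ℚ ⧸ virtIdeal2

/-- The image of `S` in `R₂`. -/
noncomputable def sElt : VirtK2 := Ideal.Quotient.mk virtIdeal2 (X 0)

/-- The image of `T` in `R₂`. -/
noncomputable def tElt : VirtK2 := Ideal.Quotient.mk virtIdeal2 (X 1)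


/-!
The three relations say `S³ = S² + S - 1`, `T³ = T² + T - 1` and `ST = S + T² - T`, so the
span of `1, S, S², T, T²` is stable under multiplication by the generators, hence is everything;
the first two relations also exhibit the inverses of `S` and `T`. The zero set of the ideal is
`{(1,1), (-1,1), (-1,-1)}`, and evaluation at the two simple points together with the values and
first derivatives along `S` and `T` at `(1,1)` (computed in dual numbers) give five functionals
separating the five monomials.
-/

theorem Submodule.span_eq_top_of_one_mem_of_mul_mem {R A : Type*} [CommSemiring R] [Semiring A]
    [Algebra R A] {s B : Set A} (hs : Algebra.adjoin R s = ⊤) (h1 : 1 ∈ span R B)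
    (hmul : ∀ x ∈ s, ∀ b ∈ B, x * b ∈ span R B) : span R B = ⊤ := by
  suffices h : ∀ a ∈ Algebra.adjoin R s, ∀ p ∈ span R B, a * p ∈ span R B from
    eq_top_iff.mpr fun a _ => mul_one a ▸ h a (hs ▸ Algebra.mem_top) 1 h1
  intro a ha
  induction ha using Algebra.adjoin_induction with
  | mem x hx => exact (span_le (p := (span R B).comap (LinearMap.mulLeft R x))).mpr (hmul x hx)
  | algebraMap r =>
    intro p hp
    rw [Algebra.algebraMap_eq_smul_one, smul_one_mul]
    exact smul_mem _ r hp
  | add x y _ _ hx hy => exact fun p hp => add_mul x y p ▸ add_mem (hx p hp) (hy p hp)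
  | mul x y _ _ hx hy => exact fun p hp => mul_assoc x y p ▸ hx _ (hy p hp)

namespace VirtK2

abbrev SatisfiesRelations {A : Type*} [CommRing A] (s t : A) : Prop :=
  (t - 1) * (t ^ 2 - 1) = 0 ∧ (s - 1) * (s ^ 2 - 1) = 0 ∧ (s - t) * (t - 1) = 0

open Ideal.Quotient in
theorem satisfiesRelations : SatisfiesRelations sElt tElt := by
  have h : ∀ p ∈ ({(X 1 - 1) * ((X 1) ^ 2 - 1), (X 0 - 1) * ((X 0) ^ 2 - 1),
      (X 0 - X 1) * (X 1 - 1)} : Set (MvPolynomial (Fin 2) ℚ)), mk virtIdeal2 p = 0 :=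
    fun p hp => eq_zero_iff_mem.mpr (Ideal.subset_span hp)
  simpa [sElt, tElt] using h

theorem sElt_pow_three : sElt ^ 3 = sElt ^ 2 + sElt - 1 := by
  linear_combination satisfiesRelations.2.1

theorem tElt_pow_three : tElt ^ 3 = tElt ^ 2 + tElt - 1 := by
  linear_combination satisfiesRelations.1

theorem sElt_mul_tElt : sElt * tElt = sElt + tElt ^ 2 - tElt := by
  linear_combination satisfiesRelations.2.2

theorem sElt_mul_tElt_sq : sElt * tElt ^ 2 = sElt + tElt ^ 2 - 1 := by
  linear_combination (tElt + 1) * sElt_mul_tElt + tElt_pow_three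

theorem sElt_sq_mul_tElt : sElt ^ 2 * tElt = sElt ^ 2 + tElt - 1 := by
  linear_combination (sElt - 1) * sElt_mul_tElt + sElt_mul_tElt_sq

theorem adjoin_sElt_tElt : Algebra.adjoin ℚ {sElt, tElt} = ⊤ := by
  have h : ({sElt, tElt} : Set VirtK2) = Ideal.Quotient.mkₐ ℚ virtIdeal2 '' Set.range X := by
    ext; simp [Fin.exists_fin_two, sElt, tElt, eq_comm]
  rw [h, ← AlgHom.map_adjoin, MvPolynomial.adjoin_range_X, Algebra.map_top,
    AlgHom.range_eq_top]
  exact Ideal.Quotient.mkₐ_surjective ℚ virtIdeal2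

theorem span_eq_top : Submodule.span ℚ {(1 : VirtK2), sElt, sElt ^ 2, tElt, tElt ^ 2} = ⊤ := by
  refine Submodule.span_eq_top_of_one_mem_of_mul_mem adjoin_sElt_tElt
    (Submodule.subset_span (by simp)) ?_
  simp only [Set.mem_insert_iff, Set.mem_singleton_iff, forall_eq_or_imp, forall_eq]
  rw [mul_one, mul_one, ← pow_two, ← pow_succ', sElt_pow_three, sElt_mul_tElt, sElt_mul_tElt_sq,
    mul_comm, sElt_mul_tElt, mul_comm, sElt_sq_mul_tElt, ← pow_two, ← pow_succ', tElt_pow_three]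
  refine ⟨⟨?_, ?_, ?_, ?_, ?_⟩, ?_, ?_, ?_, ?_, ?_⟩ <;>
    repeat' first | (apply Submodule.subset_span; simp; done) | apply add_mem | apply sub_mem

section lift

variable {A : Type*} [CommRing A] [Algebra ℚ A] (s t : A) (h : SatisfiesRelations s t)

noncomputable def lift : VirtK2 →ₐ[ℚ] A :=
  Ideal.Quotient.liftₐ virtIdeal2 (aeval ![s, t]) fun _ hp =>
    Ideal.span_le (I := RingHom.ker (aeval ![s, t])).mpr
      (by simpa [Set.insert_subset_iff] using h) hp

@[simp] theorem lift_sElt : lift s t h sElt = s := aeval_X ![s, t] 0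

@[simp] theorem lift_tElt : lift s t h tElt = t := aeval_X ![s, t] 1

end lift

open DualNumber in
theorem linearIndependent :
    LinearIndependent ℚ ![(1 : VirtK2), sElt, sElt ^ 2, tElt, tElt ^ 2] := by
  rw [Fintype.linearIndependent_iff]
  intro g hg
  simp only [Fin.sum_univ_five, Matrix.cons_val] at hg
  have at_point (s t : ℚ) h := congrArg (lift s t h) hg
  have at_one_one : g 0 + g 1 + g 2 + g 3 + g 4 = 0 := by
    simpa using at_point 1 1 ⟨by norm_num, by norm_num, by norm_num⟩
  have at_neg_one_one : g 0 - g 1 + g 2 + g 3 + g 4 = 0 := by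
    simpa [sub_eq_add_neg] using at_point (-1) 1 ⟨by norm_num, by norm_num, by norm_num⟩
  have at_neg_one_neg_one : g 0 - g 1 + g 2 - g 3 + g 4 = 0 := by
    simpa [sub_eq_add_neg] using at_point (-1) (-1) ⟨by norm_num, by norm_num, by norm_num⟩
  have ε_sq : (ε * ε : DualNumber ℚ) = 0 := eps_mul_eps
  have deriv_S : g 1 + g 2 * 2 = 0 := by
    have h := congrArg (TrivSqZeroExt.snd ∘ lift (1 + ε : DualNumber ℚ) 1
      ⟨by simp, by linear_combination (ε + 2) * ε_sq, by simp⟩) hg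
    simpa using h
  have deriv_T : g 3 + g 4 * 2 = 0 := by
    have h := congrArg (TrivSqZeroExt.snd ∘ lift (1 : DualNumber ℚ) (1 + ε)
      ⟨by linear_combination (ε + 2) * ε_sq, by simp, by linear_combination -ε_sq⟩) hg
    simpa using h
  intro i
  fin_cases i <;> dsimp <;> linarith

noncomputable def basis : Module.Basis (Fin 5) ℚ VirtK2 :=
  .mk linearIndependent <| by
    simp only [Matrix.range_cons, Matrix.range_empty, Set.union_empty, Set.singleton_union,
      span_eq_top, le_refl]

theorem finrank_eq_five : Module.finrank ℚ VirtK2 = 5 := by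
  simpa using Module.finrank_eq_card_basis basis

end VirtK2

theorem virtual_Ktheory_P12_basis_and_units :
    LinearIndependent ℚ ![(1 : VirtK2), sElt, sElt ^ 2, tElt, tElt ^ 2] ∧
    Submodule.span ℚ {(1 : VirtK2), sElt, sElt ^ 2, tElt, tElt ^ 2} = ⊤ ∧
    Module.finrank ℚ VirtK2 = 5 ∧
    IsUnit sElt ∧ IsUnit tElt ∧
    sElt * (-sElt ^ 2 + sElt + 1) = 1 ∧
    tElt * (-tElt ^ 2 + tElt + 1) = 1 := by
  have hS : sElt * (-sElt ^ 2 + sElt + 1) = 1 := by linear_combination -VirtK2.sElt_pow_three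
  have hT : tElt * (-tElt ^ 2 + tElt + 1) = 1 := by linear_combination -VirtK2.tElt_pow_three
  exact ⟨VirtK2.linearIndependent, VirtK2.span_eq_top, VirtK2.finrank_eq_five,
    .of_mul_eq_one _ hS, .of_mul_eq_one _ hT, hS, hT⟩
end
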